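/- Let g : ℝ → ℝ be twice differentiable, let t ∈ ℝ and Δt > 0, and suppose |g''(s)| ≤ M for all s ∈ [t − 2Δt, t + Δt/2]. Then the three-step extrapolation formula used for the convective term satisfies the second-order error bound |g(t + Δt/2) − (g(t) + (1/2)·g(t − Δt) − (1/2)·g(t − 2Δt))| ≤ 2·M·Δt². -/

import Mathlib

/-!
The weights `1, 1/2, -1/2` at `t, t - Δt, t - 2Δt` reproduce constants and linear functions at
`t + Δt/2`, so the extrapolation error is the same combination of first-order Taylor remainders
about `t`. By Taylor's theorem with Lagrange remainder each of them is at most `M h² / 2` for the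
offsets `h = Δt/2, -Δt, -2Δt`, which adds up to `(1/8 + 1/4 + 1) M Δt² ≤ 2 M Δt²`.
-/

open Set Topology

theorem taylor_mean_remainder_lagrange_one {g : ℝ → ℝ} (hg : Differentiable ℝ g)
    (hg' : Differentiable ℝ (deriv g)) {a x : ℝ} (hax : a ≠ x) :
    ∃ c ∈ uIoo a x, g x - g a - deriv g a * (x - a) = deriv (deriv g) c * (x - a) ^ 2 / 2 := by
  set s := uIcc a x
  have hs : UniqueDiffOn ℝ s := uniqueDiffOn_uIcc hax
  have hderiv : EqOn (derivWithin g s) (deriv g) s := fun y hy => (hg y).derivWithin (hs y hy)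
  have hC1 : ContDiff ℝ 1 g := contDiff_one_iff_deriv.2 ⟨hg, hg'.continuous⟩
  obtain ⟨c, hc, h⟩ := taylor_mean_remainder_lagrange (n := 1) hax hC1.contDiffOn <| by
    rw [iteratedDerivWithin_one]
    exact hg'.differentiableOn.congr fun y hy => hderiv (uIoo_subset_uIcc_self hy)
  have hnhds : s ∈ 𝓝 c := Icc_mem_nhds hc.1 hc.2
  have hsecond : iteratedDerivWithin 2 g s c = deriv (deriv g) c := by
    rw [iteratedDerivWithin_succ, iteratedDerivWithin_one, derivWithin_of_mem_nhds hnhds]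
    exact (hderiv.eventuallyEq_of_mem hnhds).deriv_eq
  refine ⟨c, hc, ?_⟩
  rw [hsecond, taylorWithinEval_succ, taylor_within_zero_eval, iteratedDerivWithin_one,
    hderiv left_mem_uIcc] at h
  simp only [CharP.cast_eq_zero, zero_add, Nat.factorial_zero, Nat.cast_one, mul_one, inv_one,
    pow_one, one_mul, smul_eq_mul, Nat.reduceAdd, Nat.factorial_two, Nat.cast_ofNat] at h
  linarith

theorem abs_taylor_remainder_one_le {g : ℝ → ℝ} (hg : Differentiable ℝ g)
    (hg' : Differentiable ℝ (deriv g)) {a x M : ℝ}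
    (hM : ∀ s ∈ uIcc a x, |deriv (deriv g) s| ≤ M) :
    |g x - g a - deriv g a * (x - a)| ≤ M * (x - a) ^ 2 / 2 := by
  rcases eq_or_ne a x with rfl | hax
  · simp
  obtain ⟨c, hc, h⟩ := taylor_mean_remainder_lagrange_one hg hg' hax
  rw [h, abs_div, abs_mul, abs_sq, abs_two]
  gcongr
  exact hM c (uIoo_subset_uIcc_self hc)

/-- Second-order error bound for the three-step extrapolation of the convective
term at the half time step `t + Δt/2` from values at `t`, `t - Δt`, `t - 2Δt`. -/
theorem three_step_extrapolation_second_order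
    (g : ℝ → ℝ) (t Δt M : ℝ)
    (hg : Differentiable ℝ g) (hg' : Differentiable ℝ (deriv g))
    (hΔt : 0 < Δt)
    (hM : ∀ s ∈ Set.Icc (t - 2 * Δt) (t + Δt / 2), |deriv (deriv g) s| ≤ M) :
    |g (t + Δt / 2) - (g t + (1 / 2) * g (t - Δt) - (1 / 2) * g (t - 2 * Δt))|
      ≤ 2 * M * Δt ^ 2 := by
  have hM₀ : 0 ≤ M := (abs_nonneg _).trans (hM t ⟨by linarith, by linarith⟩)
  have remainder (x : ℝ) (hx : x ∈ Icc (t - 2 * Δt) (t + Δt / 2)) :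
      |g x - g t - deriv g t * (x - t)| ≤ M * (x - t) ^ 2 / 2 :=
    abs_taylor_remainder_one_le hg hg' fun s hs =>
      hM s (uIcc_subset_Icc ⟨by linarith, by linarith⟩ hx hs)
  have h₁ := remainder (t + Δt / 2) ⟨by linarith, le_rfl⟩
  have h₂ := remainder (t - Δt) ⟨by linarith, by linarith⟩
  have h₃ := remainder (t - 2 * Δt) ⟨le_rfl, by linarith⟩
  rw [abs_le] at h₁ h₂ h₃ ⊢
  constructor <;> nlinarith [mul_nonneg hM₀ (sq_nonneg Δt)]
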